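/- The correlation parameter ρ := Corr(f(X_{11},X_{21}), f(X_{11},X_{31})) always satisfies 0 ≤ ρ ≤ 1/2. Equivalently, the (constant) correlation ρ of any two of the variables f(X_{1l},X_{2l}), f(X_{1l},X_{3l}), … sharing exactly one index is nonnegative, and it is at most 1/2 because the covariance matrix of (T_{12},T_{13},T_{23},T_{14},T_{24},T_{34}) has eigenvalue 1 − 2ρ and must be positive semidefinite. -/

import Mathlib

open MeasureTheory ProbabilityTheory Filter Asymptotics Topology

noncomputable section

namespace RandomWalkMax

variable {Ω : Type*} [MeasurableSpace Ω]

/-- `p̃ = p(p-1)/2`. -/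
def ptilde (p : ℕ) : ℝ := (p : ℝ) * ((p : ℝ) - 1) / 2

/-- The normalizing sequence `d_{n,1}`. -/
def dn1 (p : ℕ) : ℝ :=
  Real.sqrt (2 * Real.log (ptilde p)) -
    (Real.log (Real.log (ptilde p)) + Real.log (4 * Real.pi)) /
      (2 * Real.sqrt (2 * Real.log (ptilde p)))

/-- The normalizing sequence `d_n^{(y)}`. -/
def dny (p n : ℕ) (y : ℝ) : ℝ :=
  dn1 p - y * Real.log (ptilde p) / (3 * Real.sqrt (n : ℝ))

/-- The standard Gumbel distribution function `Λ(x) = exp(-exp(-x))`. -/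
def stdGumbelCDF (x : ℝ) : ℝ := Real.exp (-Real.exp (-x))

/-- `E[f(X_{11}, X_{21})]`. -/
def fMean (μ : Measure Ω) (f : ℝ → ℝ → ℝ) (X : ℕ → ℕ → Ω → ℝ) : ℝ :=
  ∫ ω, f (X 0 0 ω) (X 1 0 ω) ∂μ

/-- `Var(f(X_{11}, X_{21}))`. -/
def fVar (μ : Measure Ω) (f : ℝ → ℝ → ℝ) (X : ℕ → ℕ → Ω → ℝ) : ℝ :=
  ∫ ω, (f (X 0 0 ω) (X 1 0 ω) - fMean μ f X) ^ 2 ∂μ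

/-- The standardized summand `Z_{i,j,l}`. -/
def Zstd (μ : Measure Ω) (f : ℝ → ℝ → ℝ) (X : ℕ → ℕ → Ω → ℝ) (i j l : ℕ) (ω : Ω) : ℝ :=
  (f (X i l ω) (X j l ω) - fMean μ f X) / Real.sqrt (fVar μ f X)

/-- The standardized random walk `T_{ij} = n^{-1/2} ∑_{l=1}^n Z_{i,j,l}`. -/
def T (μ : Measure Ω) (f : ℝ → ℝ → ℝ) (X : ℕ → ℕ → Ω → ℝ) (n i j : ℕ) (ω : Ω) : ℝ :=
  (1 / Real.sqrt (n : ℝ)) * ∑ l ∈ Finset.range n, Zstd μ f X i j l ω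

/-- `max_{1 ≤ i < j ≤ p} d (T_{ij} - d)`. -/
def maxStat (μ : Measure Ω) (f : ℝ → ℝ → ℝ) (X : ℕ → ℕ → Ω → ℝ) (p n : ℕ) (d : ℝ)
    (ω : Ω) : ℝ :=
  ⨆ q : {q : ℕ × ℕ // q.1 < q.2 ∧ q.2 < p}, d * (T μ f X n q.1.1 q.1.2 ω - d)

/-- The correlation parameter `ρ = E[Z_{1,2,1} Z_{1,3,1}]`. -/
def rho (μ : Measure Ω) (f : ℝ → ℝ → ℝ) (X : ℕ → ℕ → Ω → ℝ) : ℝ :=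
  ∫ ω, Zstd μ f X 0 1 0 ω * Zstd μ f X 0 2 0 ω ∂μ

/-- The standing assumptions: `(X_{it})` iid, `f` measurable and symmetric, and
`f(X_{11},X_{21})` square integrable with positive variance. -/
structure StdSetting (μ : Measure Ω) (f : ℝ → ℝ → ℝ) (X : ℕ → ℕ → Ω → ℝ) : Prop where
  meas : ∀ i t, Measurable (X i t)
  fmeas : Measurable (Function.uncurry f)
  fsymm : ∀ x y, f x y = f y x
  indep : iIndepFun (fun q : ℕ × ℕ => X q.1 q.2) μ
  ident : ∀ i t, IdentDistrib (X i t) (X 0 0) μ μ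
  sqInt : Integrable (fun ω => (f (X 0 0 ω) (X 1 0 ω)) ^ 2) μ
  varPos : 0 < fVar μ f X

/-- Condition (C1) together with the growth rate `p = O(n^{(s-2)/4})`. -/
def CondC1 (μ : Measure Ω) (f : ℝ → ℝ → ℝ) (X : ℕ → ℕ → Ω → ℝ) (p : ℕ → ℕ) (s : ℝ) : Prop :=
  2 < s ∧
  Integrable (fun ω =>
    |Zstd μ f X 0 1 0 ω| ^ s * (Real.log |Zstd μ f X 0 1 0 ω|) ^ (s / 2)) μ ∧
  rho μ f X ≤ 1 / 3 ∧
  (fun n => (p n : ℝ)) =O[atTop] fun n => (n : ℝ) ^ ((s - 2) / 4)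

/-- Condition (C2) together with the growth rate `p = exp(o(n^{r/(2-r)}))`. -/
def CondC2 (μ : Measure Ω) (f : ℝ → ℝ → ℝ) (X : ℕ → ℕ → Ω → ℝ) (p : ℕ → ℕ) (η r : ℝ) : Prop :=
  0 < η ∧ 0 < r ∧ r ≤ 2 / 3 ∧
  Integrable (fun ω => Real.exp (η * |Zstd μ f X 0 1 0 ω| ^ r)) μ ∧
  rho μ f X < 1 / 3 ∧
  (fun n => Real.log (p n)) =o[atTop] fun n => (n : ℝ) ^ (r / (2 - r))

/-- Condition (C3) together with the growth rate `p = exp(o(n^{1/(3+2/r)}))`. -/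
def CondC3 (μ : Measure Ω) (f : ℝ → ℝ → ℝ) (X : ℕ → ℕ → Ω → ℝ) (p : ℕ → ℕ) (η r : ℝ) : Prop :=
  0 < η ∧ 1 / 2 ≤ r ∧
  Integrable (fun ω => Real.exp (η * |Zstd μ f X 0 1 0 ω| ^ r)) μ ∧
  rho μ f X = 1 / 3 ∧
  (fun n => Real.log (p n)) =o[atTop] fun n => (n : ℝ) ^ (1 / (3 + 2 / r))

/-- Condition (C4) together with the growth rate `p = exp(o(n^{1/3}))`. -/
def CondC4 (μ : Measure Ω) (f : ℝ → ℝ → ℝ) (X : ℕ → ℕ → Ω → ℝ) (p : ℕ → ℕ) (K : ℝ) : Prop :=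
  (∀ᵐ ω ∂μ, |Zstd μ f X 0 1 0 ω| < K) ∧
  rho μ f X = 1 / 3 ∧
  (fun n => Real.log (p n)) =o[atTop] fun n => (n : ℝ) ^ ((1 : ℝ) / 3)


/-- The correlation parameter `ρ = Corr(f(X_{11},X_{21}), f(X_{11},X_{31}))` always lies
in `[0, 1/2]`. -/
theorem rho_mem_Icc
    (μ : Measure Ω) [IsProbabilityMeasure μ]
    (f : ℝ → ℝ → ℝ) (X : ℕ → ℕ → Ω → ℝ)
    (hstd : StdSetting μ f X) :
    0 ≤ rho μ f X ∧ rho μ f X ≤ 1 / 2 := by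
  obtain ⟨hXmeas, hfmeas, hfsymm, hindep, hident, hsqInt, hvarPos⟩ := hstd
  classical
  set m := fMean μ f X with hm
  set σ := Real.sqrt (fVar μ f X) with hσdef
  have hσ : 0 < σ := Real.sqrt_pos.mpr hvarPos
  set g : ℝ → ℝ → ℝ := fun x y => (f x y - m) / σ with hg
  have hgsymm : ∀ x y, g x y = g y x := fun x y => by simp [hg, hfsymm x y]
  have hGmeas : Measurable (fun p : ℝ × ℝ => g p.1 p.2) := by
    have : Measurable (fun p : ℝ × ℝ => f p.1 p.2) := hfmeas
    fun_prop
  set ν : Measure ℝ := μ.map (X 0 0) with hν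
  haveI : IsProbabilityMeasure ν := Measure.isProbabilityMeasure_map (hXmeas 0 0).aemeasurable
  set νν : Measure (ℝ × ℝ) := ν.prod ν with hνν
  haveI : IsProbabilityMeasure νν := by rw [hνν]; infer_instance
  have hlaw1 : ∀ a b : ℕ, μ.map (X a b) = ν := fun a b => (hident a b).map_eq
  have hpair : ∀ a b c d : ℕ, (a, b) ≠ (c, d) →
      μ.map (fun ω => (X a b ω, X c d ω)) = νν := by
    intro a b c d hne
    have h : IndepFun (X a b) (X c d) μ := hindep.indepFun hne
    rw [(indepFun_iff_map_prod_eq_prod_map_map (hXmeas a b).aemeasurable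
      (hXmeas c d).aemeasurable).mp h, hlaw1, hlaw1]
  -- triple law
  have htriple : ∀ i j k : ℕ, i ≠ j → i ≠ k → j ≠ k →
      μ.map (fun ω => (X i 0 ω, (X j 0 ω, X k 0 ω))) = ν.prod νν := by
    intro i j k hij hik hjk
    have h1 : IndepFun (fun ω => (X j 0 ω, X k 0 ω)) (X i 0) μ :=
      hindep.indepFun_prodMk (fun q => hXmeas q.1 q.2) (j, 0) (k, 0) (i, 0)
        (by simp [hij.symm]) (by simp [hik.symm])
    have h := h1.symm
    rw [(indepFun_iff_map_prod_eq_prod_map_map (hXmeas i 0).aemeasurable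
      ((hXmeas j 0).prodMk (hXmeas k 0)).aemeasurable).mp h, hlaw1,
      hpair j 0 k 0 (by simp [hjk])]
  -- quadruple law
  have hquad : ∀ a b c d : ℕ, a ≠ b → c ≠ d → a ≠ c → a ≠ d → b ≠ c → b ≠ d →
      μ.map (fun ω => ((X a 0 ω, X b 0 ω), (X c 0 ω, X d 0 ω))) = νν.prod νν := by
    intro a b c d hab hcd hac had hbc hbd
    have h : IndepFun (fun ω => (X a 0 ω, X b 0 ω)) (fun ω => (X c 0 ω, X d 0 ω)) μ :=
      hindep.indepFun_prodMk_prodMk (fun q => hXmeas q.1 q.2) (a, 0) (b, 0) (c, 0) (d, 0)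
        (by simp [hac]) (by simp [had]) (by simp [hbc]) (by simp [hbd])
    rw [(indepFun_iff_map_prod_eq_prod_map_map
      ((hXmeas a 0).prodMk (hXmeas b 0)).aemeasurable
      ((hXmeas c 0).prodMk (hXmeas d 0)).aemeasurable).mp h,
      hpair a 0 b 0 (by simp [hab]), hpair c 0 d 0 (by simp [hcd])]
  -- basic integrability on μ
  have hT01 : AEMeasurable (fun ω => (X 0 0 ω, X 1 0 ω)) μ :=
    ((hXmeas 0 0).prodMk (hXmeas 1 0)).aemeasurable
  have hFmeas : Measurable (fun p : ℝ × ℝ => f p.1 p.2) := hfmeas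
  have hfμmeas : AEStronglyMeasurable (fun ω => f (X 0 0 ω) (X 1 0 ω)) μ :=
    (hFmeas.comp ((hXmeas 0 0).prodMk (hXmeas 1 0))).aestronglyMeasurable
  have hfμint : Integrable (fun ω => f (X 0 0 ω) (X 1 0 ω)) μ := by
    refine ((integrable_const (1 : ℝ)).add hsqInt).mono' hfμmeas ?_
    filter_upwards with ω
    have := sq_nonneg (|f (X 0 0 ω) (X 1 0 ω)| - 1)
    simp only [Real.norm_eq_abs, Pi.add_apply]
    nlinarith [abs_nonneg (f (X 0 0 ω) (X 1 0 ω)), sq_abs (f (X 0 0 ω) (X 1 0 ω))]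
  -- transfer to νν
  have hFsqint : Integrable (fun p : ℝ × ℝ => (f p.1 p.2) ^ 2) νν := by
    rw [← hpair 0 0 1 0 (by decide)]
    exact (integrable_map_measure ((hFmeas.pow_const 2).aestronglyMeasurable.mono_measure
      le_rfl) hT01).mpr hsqInt
  have hFint : Integrable (fun p : ℝ × ℝ => f p.1 p.2) νν := by
    rw [← hpair 0 0 1 0 (by decide)]
    exact (integrable_map_measure hFmeas.aestronglyMeasurable hT01).mpr hfμint
  have hmean : ∫ p : ℝ × ℝ, f p.1 p.2 ∂νν = m := by
    rw [← hpair 0 0 1 0 (by decide), integral_map hT01 hFmeas.aestronglyMeasurable]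
    rfl
  have hvar : ∫ p : ℝ × ℝ, (f p.1 p.2 - m) ^ 2 ∂νν = fVar μ f X := by
    rw [← hpair 0 0 1 0 (by decide), integral_map hT01
      (by have h : Measurable (fun p : ℝ × ℝ => (f p.1 p.2 - m) ^ 2) := (hFmeas.sub measurable_const).pow_const 2; exact h.aestronglyMeasurable)]
    rfl
  have hFsubsqint : Integrable (fun p : ℝ × ℝ => (f p.1 p.2 - m) ^ 2) νν := by
    have : (fun p : ℝ × ℝ => (f p.1 p.2 - m) ^ 2)
        = fun p => (f p.1 p.2) ^ 2 - (2 * m) * f p.1 p.2 + m ^ 2 := by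
      funext p; ring
    rw [this]
    exact (hFsqint.sub (hFint.const_mul _)).add (integrable_const _)
  -- G facts
  have hGint : Integrable (fun p : ℝ × ℝ => g p.1 p.2) νν := by
    simp only [hg]
    exact (hFint.sub (integrable_const m)).div_const σ
  have hGzero : ∫ p : ℝ × ℝ, g p.1 p.2 ∂νν = 0 := by
    simp only [hg, div_eq_mul_inv]
    rw [integral_mul_const, integral_sub hFint (integrable_const m), hmean, integral_const]
    simp
  have hG2eq : ∀ p : ℝ × ℝ, (g p.1 p.2) ^ 2 = (f p.1 p.2 - m) ^ 2 / fVar μ f X := by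
    intro p
    rw [hg]
    rw [div_pow, hσdef, Real.sq_sqrt hvarPos.le]
  have hG2int : Integrable (fun p : ℝ × ℝ => (g p.1 p.2) ^ 2) νν := by
    simp only [hG2eq]
    exact hFsubsqint.div_const _
  have hG2one : ∫ p : ℝ × ℝ, (g p.1 p.2) ^ 2 ∂νν = 1 := by
    simp only [hG2eq, div_eq_mul_inv]
    rw [integral_mul_const, hvar, mul_inv_cancel₀ hvarPos.ne']
  -- μ-side squared Z facts
  have hZmeas : ∀ a b : ℕ, Measurable (fun ω => g (X a 0 ω) (X b 0 ω)) :=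
    fun a b => hGmeas.comp ((hXmeas a 0).prodMk (hXmeas b 0))
  have hZ2int : ∀ a b : ℕ, a ≠ b → Integrable (fun ω => (g (X a 0 ω) (X b 0 ω)) ^ 2) μ := by
    intro a b hab
    have h : Integrable (fun p : ℝ × ℝ => (g p.1 p.2) ^ 2)
        (μ.map (fun ω => (X a 0 ω, X b 0 ω))) := by
      rw [hpair a 0 b 0 (by simp [hab])]; exact hG2int
    exact (integrable_map_measure ((hGmeas.pow_const 2).aestronglyMeasurable)
      ((hXmeas a 0).prodMk (hXmeas b 0)).aemeasurable).mp h
  have hZ2one : ∀ a b : ℕ, a ≠ b → ∫ ω, (g (X a 0 ω) (X b 0 ω)) ^ 2 ∂μ = 1 := by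
    intro a b hab
    rw [← hG2one, ← hpair a 0 b 0 (by simp [hab]),
      integral_map ((hXmeas a 0).prodMk (hXmeas b 0)).aemeasurable
        ((hGmeas.pow_const 2).aestronglyMeasurable)]
  -- products are integrable
  have hZPint : ∀ a b c d : ℕ, a ≠ b → c ≠ d →
      Integrable (fun ω => g (X a 0 ω) (X b 0 ω) * g (X c 0 ω) (X d 0 ω)) μ := by
    intro a b c d hab hcd
    refine (((hZ2int a b hab).add (hZ2int c d hcd)).div_const 2).mono'
      ((hZmeas a b).mul (hZmeas c d)).aestronglyMeasurable ?_
    filter_upwards with ω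
    simp only [Real.norm_eq_abs, Pi.add_apply, abs_mul]
    nlinarith [sq_abs (g (X a 0 ω) (X b 0 ω)), sq_abs (g (X c 0 ω) (X d 0 ω)),
      sq_nonneg (|g (X a 0 ω) (X b 0 ω)| - |g (X c 0 ω) (X d 0 ω)|)]
  -- the shared-index integral
  set R : ℝ := ∫ p : ℝ × ℝ × ℝ, g p.1 p.2.1 * g p.1 p.2.2 ∂(ν.prod νν) with hR
  have hRmeas : Measurable (fun p : ℝ × ℝ × ℝ => g p.1 p.2.1 * g p.1 p.2.2) := by
    fun_prop
  have hshared : ∀ i j k : ℕ, i ≠ j → i ≠ k → j ≠ k →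
      ∫ ω, g (X i 0 ω) (X j 0 ω) * g (X i 0 ω) (X k 0 ω) ∂μ = R := by
    intro i j k hij hik hjk
    rw [hR, ← htriple i j k hij hik hjk,
      integral_map ((hXmeas i 0).prodMk ((hXmeas j 0).prodMk (hXmeas k 0))).aemeasurable
        hRmeas.aestronglyMeasurable]
  have hRint : Integrable (fun p : ℝ × ℝ × ℝ => g p.1 p.2.1 * g p.1 p.2.2) (ν.prod νν) := by
    rw [← htriple 0 1 2 (by norm_num) (by norm_num) (by norm_num)]
    exact (integrable_map_measure hRmeas.aestronglyMeasurable
      ((hXmeas 0 0).prodMk ((hXmeas 1 0).prodMk (hXmeas 2 0))).aemeasurable).mpr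
      (hZPint 0 1 0 2 (by norm_num) (by norm_num))
  have hRnonneg : 0 ≤ R := by
    rw [hR, MeasureTheory.integral_prod _ hRint]
    refine integral_nonneg fun x => ?_
    have : ∫ q : ℝ × ℝ, g x q.1 * g x q.2 ∂νν
        = (∫ y, g x y ∂ν) * ∫ y, g x y ∂ν := integral_prod_mul (g x) (g x)
    rw [this]
    exact mul_self_nonneg _
  -- disjoint pairs integrate to 0
  have hdisj : ∀ a b c d : ℕ, a ≠ b → c ≠ d → a ≠ c → a ≠ d → b ≠ c → b ≠ d →
      ∫ ω, g (X a 0 ω) (X b 0 ω) * g (X c 0 ω) (X d 0 ω) ∂μ = 0 := by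
    intro a b c d hab hcd hac had hbc hbd
    have hQmeas : Measurable (fun q : (ℝ × ℝ) × ℝ × ℝ => g q.1.1 q.1.2 * g q.2.1 q.2.2) := by
      fun_prop
    have : ∫ ω, g (X a 0 ω) (X b 0 ω) * g (X c 0 ω) (X d 0 ω) ∂μ
        = ∫ q : (ℝ × ℝ) × ℝ × ℝ, g q.1.1 q.1.2 * g q.2.1 q.2.2 ∂(νν.prod νν) := by
      rw [← hquad a b c d hab hcd hac had hbc hbd,
        integral_map (((hXmeas a 0).prodMk (hXmeas b 0)).prodMk
          ((hXmeas c 0).prodMk (hXmeas d 0))).aemeasurable hQmeas.aestronglyMeasurable]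
    rw [this,
      integral_prod_mul (fun p : ℝ × ℝ => g p.1 p.2) (fun p : ℝ × ℝ => g p.1 p.2),
      hGzero, mul_zero]
  -- shared / disjoint cross-term values
  have hAB : ∫ ω, g (X 0 0 ω) (X 1 0 ω) * g (X 0 0 ω) (X 2 0 ω) ∂μ = R :=
    hshared 0 1 2 (by norm_num) (by norm_num) (by norm_num)
  have hAC : ∫ ω, g (X 0 0 ω) (X 1 0 ω) * g (X 1 0 ω) (X 3 0 ω) ∂μ = R := by
    have e : (fun ω => g (X 0 0 ω) (X 1 0 ω) * g (X 1 0 ω) (X 3 0 ω))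
        = fun ω => g (X 1 0 ω) (X 0 0 ω) * g (X 1 0 ω) (X 3 0 ω) :=
      funext fun ω => by rw [hgsymm]
    rw [e]; exact hshared 1 0 3 (by norm_num) (by norm_num) (by norm_num)
  have hBD : ∫ ω, g (X 0 0 ω) (X 2 0 ω) * g (X 2 0 ω) (X 3 0 ω) ∂μ = R := by
    have e : (fun ω => g (X 0 0 ω) (X 2 0 ω) * g (X 2 0 ω) (X 3 0 ω))
        = fun ω => g (X 2 0 ω) (X 0 0 ω) * g (X 2 0 ω) (X 3 0 ω) :=
      funext fun ω => by rw [hgsymm]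
    rw [e]; exact hshared 2 0 3 (by norm_num) (by norm_num) (by norm_num)
  have hCD : ∫ ω, g (X 1 0 ω) (X 3 0 ω) * g (X 2 0 ω) (X 3 0 ω) ∂μ = R := by
    have e : (fun ω => g (X 1 0 ω) (X 3 0 ω) * g (X 2 0 ω) (X 3 0 ω))
        = fun ω => g (X 3 0 ω) (X 1 0 ω) * g (X 3 0 ω) (X 2 0 ω) :=
      funext fun ω => by rw [hgsymm (X 1 0 ω), hgsymm (X 2 0 ω)]
    rw [e]; exact hshared 3 1 2 (by norm_num) (by norm_num) (by norm_num)
  have hAD : ∫ ω, g (X 0 0 ω) (X 1 0 ω) * g (X 2 0 ω) (X 3 0 ω) ∂μ = 0 :=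
    hdisj 0 1 2 3 (by norm_num) (by norm_num) (by norm_num) (by norm_num) (by norm_num)
      (by norm_num)
  have hBC : ∫ ω, g (X 0 0 ω) (X 2 0 ω) * g (X 1 0 ω) (X 3 0 ω) ∂μ = 0 :=
    hdisj 0 2 1 3 (by norm_num) (by norm_num) (by norm_num) (by norm_num) (by norm_num)
      (by norm_num)
  -- integrabilities
  have iA2 := hZ2int 0 1 (by norm_num)
  have iB2 := hZ2int 0 2 (by norm_num)
  have iC2 := hZ2int 1 3 (by norm_num)
  have iD2 := hZ2int 2 3 (by norm_num)
  have iAB := hZPint 0 1 0 2 (by norm_num) (by norm_num)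
  have iAC := hZPint 0 1 1 3 (by norm_num) (by norm_num)
  have iAD := hZPint 0 1 2 3 (by norm_num) (by norm_num)
  have iBC := hZPint 0 2 1 3 (by norm_num) (by norm_num)
  have iBD := hZPint 0 2 2 3 (by norm_num) (by norm_num)
  have iCD := hZPint 1 3 2 3 (by norm_num) (by norm_num)
  have iS2 : Integrable (fun ω => g (X 0 0 ω) (X 1 0 ω) ^ 2 + g (X 0 0 ω) (X 2 0 ω) ^ 2) μ := iA2.add iB2
  have iS3 : Integrable (fun ω => (g (X 0 0 ω) (X 1 0 ω) ^ 2 + g (X 0 0 ω) (X 2 0 ω) ^ 2) + g (X 1 0 ω) (X 3 0 ω) ^ 2) μ := iS2.add iC2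
  have iS4 : Integrable (fun ω => ((g (X 0 0 ω) (X 1 0 ω) ^ 2 + g (X 0 0 ω) (X 2 0 ω) ^ 2) + g (X 1 0 ω) (X 3 0 ω) ^ 2) + g (X 2 0 ω) (X 3 0 ω) ^ 2) μ := iS3.add iD2
  have iX1 : Integrable (fun ω => -(g (X 0 0 ω) (X 1 0 ω) * g (X 0 0 ω) (X 2 0 ω))) μ :=
    iAB.neg
  have iX2 : Integrable (fun ω => -(g (X 0 0 ω) (X 1 0 ω) * g (X 0 0 ω) (X 2 0 ω)) - g (X 0 0 ω) (X 1 0 ω) * g (X 1 0 ω) (X 3 0 ω)) μ := iX1.sub iAC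
  have iX3 : Integrable (fun ω => (-(g (X 0 0 ω) (X 1 0 ω) * g (X 0 0 ω) (X 2 0 ω)) - g (X 0 0 ω) (X 1 0 ω) * g (X 1 0 ω) (X 3 0 ω)) + g (X 0 0 ω) (X 1 0 ω) * g (X 2 0 ω) (X 3 0 ω)) μ := iX2.add iAD
  have iX4 : Integrable (fun ω => ((-(g (X 0 0 ω) (X 1 0 ω) * g (X 0 0 ω) (X 2 0 ω)) - g (X 0 0 ω) (X 1 0 ω) * g (X 1 0 ω) (X 3 0 ω)) + g (X 0 0 ω) (X 1 0 ω) * g (X 2 0 ω) (X 3 0 ω)) + g (X 0 0 ω) (X 2 0 ω) * g (X 1 0 ω) (X 3 0 ω)) μ := iX3.add iBC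
  have iX5 : Integrable (fun ω => (((-(g (X 0 0 ω) (X 1 0 ω) * g (X 0 0 ω) (X 2 0 ω)) - g (X 0 0 ω) (X 1 0 ω) * g (X 1 0 ω) (X 3 0 ω)) + g (X 0 0 ω) (X 1 0 ω) * g (X 2 0 ω) (X 3 0 ω)) + g (X 0 0 ω) (X 2 0 ω) * g (X 1 0 ω) (X 3 0 ω)) - g (X 0 0 ω) (X 2 0 ω) * g (X 2 0 ω) (X 3 0 ω)) μ := iX4.sub iBD
  have iX6 : Integrable (fun ω => ((((-(g (X 0 0 ω) (X 1 0 ω) * g (X 0 0 ω) (X 2 0 ω)) - g (X 0 0 ω) (X 1 0 ω) * g (X 1 0 ω) (X 3 0 ω)) + g (X 0 0 ω) (X 1 0 ω) * g (X 2 0 ω) (X 3 0 ω)) + g (X 0 0 ω) (X 2 0 ω) * g (X 1 0 ω) (X 3 0 ω)) - g (X 0 0 ω) (X 2 0 ω) * g (X 2 0 ω) (X 3 0 ω)) - g (X 1 0 ω) (X 3 0 ω) * g (X 2 0 ω) (X 3 0 ω)) μ := iX5.sub iCD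
  have hval : ∫ ω, (g (X 0 0 ω) (X 1 0 ω) - g (X 0 0 ω) (X 2 0 ω)
      - g (X 1 0 ω) (X 3 0 ω) + g (X 2 0 ω) (X 3 0 ω)) ^ 2 ∂μ = 4 - 8 * R := by
    have e1 : ∀ ω : Ω, (g (X 0 0 ω) (X 1 0 ω) - g (X 0 0 ω) (X 2 0 ω) - g (X 1 0 ω) (X 3 0 ω) + g (X 2 0 ω) (X 3 0 ω)) ^ 2
        = (((g (X 0 0 ω) (X 1 0 ω) ^ 2 + g (X 0 0 ω) (X 2 0 ω) ^ 2) + g (X 1 0 ω) (X 3 0 ω) ^ 2) + g (X 2 0 ω) (X 3 0 ω) ^ 2) + (2 : ℝ) * (((((-(g (X 0 0 ω) (X 1 0 ω) * g (X 0 0 ω) (X 2 0 ω)) - g (X 0 0 ω) (X 1 0 ω) * g (X 1 0 ω) (X 3 0 ω)) + g (X 0 0 ω) (X 1 0 ω) * g (X 2 0 ω) (X 3 0 ω)) + g (X 0 0 ω) (X 2 0 ω) * g (X 1 0 ω) (X 3 0 ω)) - g (X 0 0 ω) (X 2 0 ω) * g (X 2 0 ω) (X 3 0 ω)) - g (X 1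 0 ω) (X 3 0 ω) * g (X 2 0 ω) (X 3 0 ω)) := fun ω => by ring
    simp_rw [e1]
    rw [integral_add iS4 (iX6.const_mul 2), integral_const_mul,
      integral_add iS3 iD2, integral_add iS2 iC2, integral_add iA2 iB2,
      integral_sub iX5 iCD, integral_sub iX4 iBD, integral_add iX3 iBC,
      integral_add iX2 iAD, integral_sub iX1 iAC, integral_neg,
      hZ2one 0 1 (by norm_num), hZ2one 0 2 (by norm_num), hZ2one 1 3 (by norm_num),
      hZ2one 2 3 (by norm_num), hAB, hAC, hAD, hBC, hBD, hCD]
    ring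
  have hVnonneg : (0 : ℝ) ≤ ∫ ω, (g (X 0 0 ω) (X 1 0 ω) - g (X 0 0 ω) (X 2 0 ω)
      - g (X 1 0 ω) (X 3 0 ω) + g (X 2 0 ω) (X 3 0 ω)) ^ 2 ∂μ :=
    integral_nonneg fun ω => sq_nonneg _
  have hRhalf : R ≤ 1 / 2 := by rw [hval] at hVnonneg; linarith
  have hrho : rho μ f X = R := by
    have hrr : rho μ f X = ∫ ω, g (X 0 0 ω) (X 1 0 ω) * g (X 0 0 ω) (X 2 0 ω) ∂μ := rfl
    rw [hrr]; exact hAB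
  refine ⟨?_, ?_⟩
  · rw [hrho]; exact hRnonneg
  · rw [hval] at hVnonneg
    rw [hrho]; linarith

end RandomWalkMax
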